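/- arXiv:2002.09677 — 3 statements merged into one kernel-verified Lean document; each statement's English description precedes it below -/
import Mathlib

section
/- Let σ_1 ≥ σ_2 ≥ ... > 0 be a summable nonincreasing sequence of positive reals and define, for N ≥ 1 and m ≥ 1, ε_m = σ_m · p_N(σ^{¬m}) / p_N(σ), where p_N denotes the elementary symmetric sum of order N and σ^{¬m} is σ with the m-th entry removed. Then the sequence (ε_m)_{m≥1} is nonincreasing in m. -/
open scoped BigOperators

/-- Elementary symmetric sum of order `M` of a sequence. -/
noncomputable def esymm (M : ℕ) (lam : ℕ → ℝ) : ℝ :=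
  ∑' s : {s : Finset ℕ // s.card = M}, ∏ u ∈ s.1, lam u

/-!
Expanding `p_{k+1}(λ)` according to whether a set contains `n` gives
`p_{k+1}(λ) = λ_n p_k(λ^{¬n}) + p_{k+1}(λ^{¬n})`. Doing this for two indices `i ≠ j` and writing
`τ` for `λ` with both entries zeroed,
`λ_i p_{k+1}(λ^{¬i}) = λ_i λ_j p_k(τ) + λ_i p_{k+1}(τ)`, and symmetrically for `j`, so the
difference of the two numerators is `(λ_i - λ_j) p_{k+1}(τ)`, which is nonnegative when
`λ_j ≤ λ_i`; the denominator `p_N(σ)` of `ε_m` does not depend on `m`.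
-/

open Function

lemma summable_finsetProd_of_summable {ι : Type*} {f : ι → ℝ} (hf : Summable f) :
    Summable fun s : Finset ι => ∏ i ∈ s, f i :=
  (summable_finsetProd_of_summable_nonneg (fun i => abs_nonneg (f i)) hf.abs).of_norm_bounded
    fun s => (norm_prod s f).le

lemma esymm_nonneg {lam : ℕ → ℝ} (h0 : 0 ≤ lam) (k : ℕ) : 0 ≤ esymm k lam :=
  tsum_nonneg fun _ => Finset.prod_nonneg fun u _ => h0 u

noncomputable def esymmTerm (k : ℕ) (lam : ℕ → ℝ) : Finset ℕ → ℝ :=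
  {s | s.card = k}.indicator fun s => ∏ u ∈ s, lam u

section esymmTerm

variable (k : ℕ) (lam : ℕ → ℝ)

lemma esymm_eq_tsum_esymmTerm : esymm k lam = ∑' s, esymmTerm k lam s := by
  rw [esymm, esymmTerm]
  exact tsum_subtype {s : Finset ℕ | s.card = k} fun s => ∏ u ∈ s, lam u

lemma summable_esymmTerm (hs : Summable lam) : Summable (esymmTerm k lam) :=
  (summable_finsetProd_of_summable hs).indicator _

lemma esymmTerm_update_zero (n : ℕ) :
    esymmTerm k (update lam n 0) = {s | n ∈ s}ᶜ.indicator (esymmTerm k lam) := by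
  ext s
  by_cases hn : n ∈ s
  · simp [esymmTerm, hn, Finset.prod_eq_zero hn]
  · have hprod : ∏ u ∈ s, update lam n 0 u = ∏ u ∈ s, lam u :=
      Finset.prod_congr rfl fun u hu => update_of_ne (ne_of_mem_of_not_mem hu hn) _ _
    simp [esymmTerm, Set.indicator_apply, hn, hprod]

lemma esymmTerm_succ_insert {n : ℕ} {t : Finset ℕ} (hn : n ∉ t) :
    esymmTerm (k + 1) lam (insert n t) = lam n * esymmTerm k lam t := by
  simp [esymmTerm, Set.indicator_apply, Finset.card_insert_of_notMem hn, Finset.prod_insert hn]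

lemma tsum_indicator_mem_esymmTerm_succ (n : ℕ) :
    ∑' s, {s | n ∈ s}.indicator (esymmTerm (k + 1) lam) s = lam n * esymm k (update lam n 0) := by
  let T : Set (Finset ℕ) := {s | n ∈ s}ᶜ
  have hinj : Injective fun t : T => insert n t.1 := fun t t' h =>
    Subtype.ext <| by
      rw [← Finset.erase_insert t.2, ← Finset.erase_insert t'.2]; exact congrArg (·.erase n) h
  have hrange : support ({s | n ∈ s}.indicator (esymmTerm (k + 1) lam)) ⊆
      Set.range fun t : T => insert n t.1 := fun s hs =>
    have hn : s ∈ {s : Finset ℕ | n ∈ s} := Set.mem_of_indicator_ne_zero hs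
    ⟨⟨s.erase n, Finset.notMem_erase n s⟩, Finset.insert_erase hn⟩
  calc ∑' s, {s | n ∈ s}.indicator (esymmTerm (k + 1) lam) s
      = ∑' t : T, {s | n ∈ s}.indicator (esymmTerm (k + 1) lam) (insert n t.1) :=
        (hinj.tsum_eq hrange).symm
    _ = ∑' t : T, lam n * esymmTerm k lam t := tsum_congr fun t => by
        have hmem : insert n t.1 ∈ {s : Finset ℕ | n ∈ s} := Finset.mem_insert_self n t.1
        rw [Set.indicator_of_mem hmem, esymmTerm_succ_insert k lam t.2]
    _ = lam n * esymm k (update lam n 0) := by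
        rw [tsum_mul_left, tsum_subtype, esymm_eq_tsum_esymmTerm, esymmTerm_update_zero]

end esymmTerm

theorem esymm_succ_eq_mul_add {lam : ℕ → ℝ} (hs : Summable lam) (k n : ℕ) :
    esymm (k + 1) lam = lam n * esymm k (update lam n 0) + esymm (k + 1) (update lam n 0) := by
  have hsum := summable_esymmTerm (k + 1) lam hs
  rw [← tsum_indicator_mem_esymmTerm_succ, esymm_eq_tsum_esymmTerm (k + 1) (update lam n 0),
    esymmTerm_update_zero, ← (hsum.indicator _).tsum_add (hsum.indicator _),
    esymm_eq_tsum_esymmTerm]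
  simp_rw [Set.indicator_self_add_compl_apply]

theorem mul_esymm_update_zero_le {lam : ℕ → ℝ} (h0 : 0 ≤ lam) (hs : Summable lam) (k : ℕ)
    {i j : ℕ} (hij : lam j ≤ lam i) :
    lam j * esymm (k + 1) (update lam j 0) ≤ lam i * esymm (k + 1) (update lam i 0) := by
  rcases eq_or_ne i j with rfl | hne
  · exact le_rfl
  set τ := update (update lam i 0) j 0
  have hi : esymm (k + 1) (update lam i 0) = lam j * esymm k τ + esymm (k + 1) τ := by
    rw [esymm_succ_eq_mul_add (hs.update i 0) k j, update_of_ne hne.symm]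
  have hj : esymm (k + 1) (update lam j 0) = lam i * esymm k τ + esymm (k + 1) τ := by
    rw [esymm_succ_eq_mul_add (hs.update j 0) k i, update_of_ne hne, update_comm hne.symm]
  have hτ : 0 ≤ τ := by
    have hi0 : 0 ≤ update lam i 0 := le_update_iff.2 ⟨le_rfl, fun m _ => h0 m⟩
    exact le_update_iff.2 ⟨le_rfl, fun m _ => hi0 m⟩
  rw [hi, hj]
  linear_combination mul_le_mul_of_nonneg_right hij (esymm_nonneg hτ (k + 1))

/-- For a summable, nonincreasing, positive sequence `σ`, the sequence
`ε_m = σ_m p_N(σ^{¬m}) / p_N(σ)` is nonincreasing in `m`. -/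
theorem eps_antitone (σ : ℕ → ℝ) (hpos : ∀ m, 0 < σ m) (hmono : Antitone σ)
    (hsum : Summable σ) (N : ℕ) (hN : 1 ≤ N) :
    Antitone (fun m : ℕ => σ m * esymm N (Function.update σ m 0) / esymm N σ) := by
  obtain ⟨k, rfl⟩ := Nat.exists_eq_add_of_le' hN
  have h0 : 0 ≤ σ := fun m => (hpos m).le
  intro a b hab
  exact div_le_div_of_nonneg_right (mul_esymm_update_zero_le h0 hsum k (hmono hab))
    (esymm_nonneg h0 _)
end

section
/- Let M ≥ 1, L ≥ M+1, and λ_1 ≥ λ_2 ≥ ... ≥ λ_L > 0. Then for every M' ≤ M, the ratio of consecutive elementary symmetric polynomials satisfies p_{M+1}(λ)/p_M(λ) ≤ (Σ_{m ≥ M'+1} λ_m) / (M + 1 − M'). -/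
/-!
Double counting. Every `(M+1)`-subset `S` of the indices contains at most `M'` indices below `M'`,
hence at least `M + 1 - M'` tail indices `u`, so
`(M + 1 - M') p_{M+1} ≤ ∑_S ∑_{u ∈ S, u tail} ∏_S λ`. Exchanging the sums, the sets containing a fixed
`u` contribute `λ_u · p_M(λ without u) ≤ λ_u · p_M(λ)`, which gives `(∑_{tail} λ_u) · p_M`.
-/

open Finset

namespace Finset

variable {ι R : Type*} [DecidableEq ι]

theorem sum_powersetCard_succ_filter_mem_prod [CommSemiring R] {s : Finset ι} (k : ℕ)
    (f : ι → R) {u : ι} (hu : u ∈ s) :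
    ∑ S ∈ (s.powersetCard (k + 1)).filter (u ∈ ·), ∏ v ∈ S, f v =
      f u * ∑ T ∈ (s.erase u).powersetCard k, ∏ v ∈ T, f v := by
  rw [mul_sum]
  refine sum_nbij' (fun S => S.erase u) (insert u) ?_ ?_ ?_ ?_ ?_
  · intro S hS
    obtain ⟨⟨hSs, hScard⟩, huS⟩ := mem_filter.1 (mem_coe.1 hS) |>.imp_left mem_powersetCard.1
    exact mem_powersetCard.2 ⟨erase_subset_erase u hSs, by rw [card_erase_of_mem huS, hScard]; rfl⟩
  · intro T hT
    obtain ⟨hTs, hTcard⟩ := mem_powersetCard.1 (mem_coe.1 hT)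
    have huT : u ∉ T := fun h => notMem_erase u s (hTs h)
    refine mem_filter.2 ⟨mem_powersetCard.2 ⟨?_, ?_⟩, mem_insert_self u T⟩
    · exact insert_subset hu (hTs.trans (erase_subset u s))
    · rw [card_insert_of_notMem huT, hTcard]
  · intro S hS
    exact insert_erase (mem_filter.1 hS).2
  · intro T hT
    exact erase_insert fun h => notMem_erase u s ((mem_powersetCard.1 hT).1 h)
  · intro S hS
    exact (mul_prod_erase S f (mem_filter.1 hS).2).symm

variable [CommSemiring R] [PartialOrder R] [IsOrderedRing R]

theorem sum_powersetCard_succ_card_filter_mul_prod_le {s : Finset ι} (k : ℕ) {f : ι → R}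
    (hf : ∀ i ∈ s, 0 ≤ f i) (p : ι → Prop) [DecidablePred p] :
    ∑ S ∈ s.powersetCard (k + 1), (#(S.filter p) : R) * ∏ v ∈ S, f v ≤
      (∑ u ∈ s.filter p, f u) * ∑ T ∈ s.powersetCard k, ∏ v ∈ T, f v := by
  have hprod : ∀ T ∈ s.powersetCard k, 0 ≤ ∏ v ∈ T, f v := fun T hT =>
    prod_nonneg fun v hv => hf v ((mem_powersetCard.1 hT).1 hv)
  calc ∑ S ∈ s.powersetCard (k + 1), (#(S.filter p) : R) * ∏ v ∈ S, f v
      = ∑ S ∈ s.powersetCard (k + 1), ∑ u ∈ S.filter p, ∏ v ∈ S, f v := by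
        simp only [sum_const, nsmul_eq_mul]
    _ = ∑ u ∈ s.filter p, ∑ S ∈ (s.powersetCard (k + 1)).filter (u ∈ ·), ∏ v ∈ S, f v :=
        sum_comm' fun S u => by
          simp only [mem_filter, mem_powersetCard]
          exact ⟨fun h => ⟨⟨h.1, h.2.1⟩, h.1.1 h.2.1, h.2.2⟩,
            fun h => ⟨h.1.1, h.1.2, h.2.2⟩⟩
    _ = ∑ u ∈ s.filter p, f u * ∑ T ∈ (s.erase u).powersetCard k, ∏ v ∈ T, f v :=
        sum_congr rfl fun u hu => sum_powersetCard_succ_filter_mem_prod k f (mem_filter.1 hu).1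
    _ ≤ ∑ u ∈ s.filter p, f u * ∑ T ∈ s.powersetCard k, ∏ v ∈ T, f v :=
        sum_le_sum fun u hu => mul_le_mul_of_nonneg_left
          (sum_le_sum_of_subset_of_nonneg (powersetCard_mono (erase_subset u s))
            fun T hT _ => hprod T hT)
          (hf u (mem_filter.1 hu).1)
    _ = (∑ u ∈ s.filter p, f u) * ∑ T ∈ s.powersetCard k, ∏ v ∈ T, f v := (sum_mul ..).symm

theorem mul_sum_powersetCard_succ_prod_le {s : Finset ι} (k : ℕ) {f : ι → R}
    (hf : ∀ i ∈ s, 0 ≤ f i) (p : ι → Prop) [DecidablePred p] {c : ℕ}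
    (hc : ∀ S ∈ s.powersetCard (k + 1), c ≤ #(S.filter p)) :
    (c : R) * ∑ S ∈ s.powersetCard (k + 1), ∏ v ∈ S, f v ≤
      (∑ u ∈ s.filter p, f u) * ∑ T ∈ s.powersetCard k, ∏ v ∈ T, f v := by
  refine le_trans ?_ (sum_powersetCard_succ_card_filter_mul_prod_le k hf p)
  rw [mul_sum]
  refine sum_le_sum fun S hS => mul_le_mul_of_nonneg_right (Nat.mono_cast (hc S hS)) ?_
  exact prod_nonneg fun v hv => hf v ((mem_powersetCard.1 hS).1 hv)

end Finset

theorem Fin.card_sub_le_card_filter_le_val {n : ℕ} (S : Finset (Fin n)) (m : ℕ) :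
    #S - m ≤ #(S.filter fun i : Fin n => m ≤ (i : ℕ)) := by
  have hlow : #(S.filter fun i : Fin n => ¬ m ≤ (i : ℕ)) ≤ m := calc
    #(S.filter fun i : Fin n => ¬ m ≤ (i : ℕ)) ≤ #(univ.filter fun i : Fin n => (i : ℕ) < m) :=
      card_le_card fun i hi => by simpa using (mem_filter.1 hi).2
    _ ≤ m := Fin.card_filter_val_lt.trans_le (min_le_right n m)
  have := card_filter_add_card_filter_not (s := S) (fun i : Fin n => m ≤ (i : ℕ))
  omega

theorem guruswami_sinop_general (M L : ℕ) (lam : Fin L → ℝ) (hpos : ∀ i, 0 < lam i) (M' : ℕ)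
    (hM' : M' ≤ M) :
    (∑ s ∈ Finset.powersetCard (M + 1) (Finset.univ : Finset (Fin L)), ∏ u ∈ s, lam u) /
        (∑ s ∈ Finset.powersetCard M (Finset.univ : Finset (Fin L)), ∏ u ∈ s, lam u) ≤
      (∑ i ∈ Finset.univ.filter (fun i : Fin L => M' ≤ (i : ℕ)), lam i) /
        ((M : ℝ) + 1 - M') := by
  have hlam : ∀ i ∈ (univ : Finset (Fin L)), 0 ≤ lam i := fun i _ => (hpos i).le
  have hc : (0 : ℝ) < M + 1 - M' := by
    have : (M' : ℝ) ≤ M := by exact_mod_cast hM'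
    linarith
  have hcount := mul_sum_powersetCard_succ_prod_le M hlam (fun i : Fin L => M' ≤ (i : ℕ))
    (c := M + 1 - M') fun S hS =>
      (mem_powersetCard.1 hS).2 ▸ Fin.card_sub_le_card_filter_le_val S M'
  rw [Nat.cast_sub (by omega), Nat.cast_add_one] at hcount
  rw [le_div_iff₀ hc, div_mul_eq_mul_div]
  exact div_le_of_le_mul₀ (sum_nonneg fun _ _ => prod_nonneg fun v _ => (hpos v).le)
    (sum_nonneg fun i _ => (hpos i).le) (by linarith)

/-- Guruswami–Sinop inequality (Theorem 3.1 of Guruswami–Sinop 2012): for nonincreasing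
positive `λ_1 ≥ ... ≥ λ_L > 0` (indexed here by `Fin L`, `0`-based) and `M' ≤ M`,
`p_{M+1}(λ)/p_M(λ) ≤ (Σ_{m ≥ M'+1} λ_m)/(M+1−M')`, where `p_M` is the elementary symmetric
polynomial of order `M` and the sum runs over the `1`-based indices `m ≥ M'+1`, i.e. the
`0`-based indices `i ≥ M'`. -/
theorem guruswami_sinop (M L : ℕ) (hM : 1 ≤ M) (hL : M + 1 ≤ L) (lam : Fin L → ℝ)
    (hmono : Antitone lam) (hpos : ∀ i, 0 < lam i) (M' : ℕ) (hM' : M' ≤ M) :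
    (∑ s ∈ Finset.powersetCard (M + 1) (Finset.univ : Finset (Fin L)), ∏ u ∈ s, lam u) /
        (∑ s ∈ Finset.powersetCard M (Finset.univ : Finset (Fin L)), ∏ u ∈ s, lam u) ≤
      (∑ i ∈ Finset.univ.filter (fun i : Fin L => M' ≤ (i : ℕ)), lam i) /
        ((M : ℝ) + 1 - M') :=
  guruswami_sinop_general M L lam hpos M' hM'
end

section
/- Let (λ_m)_{m≥1} be a nonincreasing summable sequence of strictly positive reals, and M ≥ 1. Then for every M' ≤ M, p_{M+1}(λ)/p_M(λ) ≤ (Σ_{m≥M'+1} λ_m)/(M+1−M'), where p_M(λ) is the elementary symmetric sum of order M over all M-element subsets of ℕ*. -/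
/-!
Double counting. Every `(M+1)`-subset `S` of `ℕ` has at least `M + 1 - M'` elements `≥ M'`, so
`(M + 1 - M') p_{M+1}` is at most the sum of `λ^S` over pairs `(S, u)` with `u ∈ S`, `u ≥ M'`.
Removing the marked point sends `(S, u)` injectively to `(S \ {u}, u)`, and `λ^S = λ^{S \ {u}} λ_u`,
so this sum is at most `p_M · ∑_{u ≥ M'} λ_u`. The same injection, with every point allowed as the
marked one, gives the summability of the series `p_M` by induction on `M`.
-/

open scoped BigOperators

open Finset

section Pointed

variable {α : Type*} (A : Set α) [DecidablePred (· ∈ A)] (M : ℕ)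

abbrev PointedFinset := Σ s : {s : Finset α // s.card = M + 1}, s.1.filter (· ∈ A)

theorem tsum_pointedFinset_fiber (f : α → ℝ) (s : {s : Finset α // s.card = M + 1}) :
    ∑' _ : s.1.filter (· ∈ A), ∏ u ∈ s.1, f u = #(s.1.filter (· ∈ A)) * ∏ u ∈ s.1, f u := by
  rw [tsum_fintype, sum_const, card_univ, Fintype.card_coe, nsmul_eq_mul]

variable {f : α → ℝ}

theorem summable_card_filter_mul_prod (hf : 0 ≤ f)
    (h : Summable fun x : PointedFinset A M => ∏ u ∈ x.1.1, f u) :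
    Summable fun s : {s : Finset α // s.card = M + 1} =>
      (#(s.1.filter (· ∈ A)) : ℝ) * ∏ u ∈ s.1, f u := by
  have := ((summable_sigma_of_nonneg fun x => prod_nonneg fun u _ => hf u).1 h).2
  simpa only [tsum_pointedFinset_fiber] using this

theorem tsum_pointedFinset_eq (h : Summable fun x : PointedFinset A M => ∏ u ∈ x.1.1, f u) :
    ∑' x : PointedFinset A M, ∏ u ∈ x.1.1, f u =
      ∑' s : {s : Finset α // s.card = M + 1}, (#(s.1.filter (· ∈ A)) : ℝ) * ∏ u ∈ s.1, f u := by
  rw [h.tsum_sigma' fun s => .of_finite]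
  exact tsum_congr (tsum_pointedFinset_fiber A M f)

variable [DecidableEq α]

def PointedFinset.erase (x : PointedFinset A M) : {t : Finset α // t.card = M} × A :=
  (⟨x.1.1.erase x.2.1, by
      rw [card_erase_of_mem (mem_filter.1 x.2.2).1, x.1.2, Nat.add_sub_cancel]⟩,
    ⟨x.2.1, (mem_filter.1 x.2.2).2⟩)

theorem PointedFinset.erase_injective : Function.Injective (PointedFinset.erase A M) := by
  rintro ⟨⟨s, hs⟩, ⟨u, hu⟩⟩ ⟨⟨t, ht⟩, ⟨v, hv⟩⟩ h
  simp only [PointedFinset.erase, Prod.mk.injEq, Subtype.mk.injEq] at h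
  obtain ⟨hst, rfl⟩ := h
  have hus : u ∈ s := (mem_filter.1 hu).1
  have hut : u ∈ t := (mem_filter.1 hv).1
  obtain rfl : s = t := by rw [← insert_erase hus, ← insert_erase hut, hst]
  rfl

theorem PointedFinset.prod_eq_prod_erase_mul {β : Type*} [CommMonoid β] (g : α → β)
    (x : PointedFinset A M) :
    ∏ u ∈ x.1.1, g u =
      (∏ u ∈ (PointedFinset.erase A M x).1.1, g u) * g (PointedFinset.erase A M x).2 :=
  (prod_erase_mul _ _ (mem_filter.1 x.2.2).1).symm

theorem summable_pointedFinset (hf : 0 ≤ f)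
    (hM : Summable fun t : {t : Finset α // t.card = M} => ∏ u ∈ t.1, f u)
    (hA : Summable fun u : A => f u) :
    Summable fun x : PointedFinset A M => ∏ u ∈ x.1.1, f u := by
  have := (hM.mul_of_nonneg hA (fun t => prod_nonneg fun u _ => hf u) fun u => hf u).comp_injective
    (PointedFinset.erase_injective A M)
  simpa only [Function.comp_def, ← PointedFinset.prod_eq_prod_erase_mul] using this

theorem tsum_pointedFinset_le (hf : 0 ≤ f)
    (hM : Summable fun t : {t : Finset α // t.card = M} => ∏ u ∈ t.1, f u)
    (hA : Summable fun u : A => f u) :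
    ∑' x : PointedFinset A M, ∏ u ∈ x.1.1, f u ≤
      (∑' t : {t : Finset α // t.card = M}, ∏ u ∈ t.1, f u) * ∑' u : A, f u := by
  have hprod := hM.mul_of_nonneg hA (fun t => prod_nonneg fun u _ => hf u) fun u => hf u
  rw [hM.tsum_mul_tsum hA hprod]
  exact Summable.tsum_le_tsum_of_inj _ (PointedFinset.erase_injective A M)
    (fun p _ => mul_nonneg (prod_nonneg fun u _ => hf u) (hf p.2))
    (fun x => (PointedFinset.prod_eq_prod_erase_mul A M f x).le)
    (summable_pointedFinset A M hf hM hA) hprod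

end Pointed

theorem summable_prod_of_card_eq {α : Type*} {f : α → ℝ} (hf : 0 ≤ f) (hs : Summable f) (M : ℕ) :
    Summable fun s : {s : Finset α // s.card = M} => ∏ u ∈ s.1, f u := by
  classical
  induction M with
  | zero =>
    have : Subsingleton {s : Finset α // s.card = 0} :=
      ⟨fun s t => Subtype.ext <| by rw [card_eq_zero.1 s.2, card_eq_zero.1 t.2]⟩
    exact .of_finite
  | succ M ih =>
    have := summable_card_filter_mul_prod Set.univ M hf
      (summable_pointedFinset Set.univ M hf ih (hs.subtype _))
    refine (summable_mul_left_iff (Nat.cast_add_one_ne_zero M)).1 (this.congr fun s => ?_)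
    rw [filter_true_of_mem fun u _ => Set.mem_univ u, s.2, Nat.cast_succ]

theorem tsum_Ici_eq_tsum_add {β : Type*} [AddCommMonoid β] [TopologicalSpace β] (f : ℕ → β)
    (k : ℕ) : ∑' u : Set.Ici k, f u = ∑' i, f (k + i) := by
  have : Set.range (k + ·) = Set.Ici k := by ext; simp [le_iff_exists_add, eq_comm]
  rw [← this, tsum_range _ (add_right_injective k)]

theorem card_le_card_filter_Ici_add (s : Finset ℕ) (k : ℕ) :
    #s ≤ #(s.filter (· ∈ Set.Ici k)) + k := by
  rw [← card_filter_add_card_filter_not (· ∈ Set.Ici k)]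
  gcongr
  calc #(s.filter (· ∉ Set.Ici k)) ≤ #(range k) :=
        card_le_card fun u hu => by simpa using (mem_filter.1 hu).2
    _ = k := card_range k

theorem esymm_pos {lam : ℕ → ℝ} (hpos : ∀ m, 0 < lam m) (hsum : Summable lam) (M : ℕ) :
    0 < esymm M lam :=
  (summable_prod_of_card_eq (fun m => (hpos m).le) hsum M).tsum_pos
    (fun _ => prod_nonneg fun u _ => (hpos u).le) ⟨range M, card_range M⟩
    (prod_pos fun u _ => hpos u)

/-- The sequence is indexed from `0`: the paper's `λ_m` is `lam (m - 1)`, and the tail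
`∑_{m ≥ M'+1} λ_m` is `∑' i, lam (M' + i)`. -/
theorem guruswami_sinop_infinite_general (lam : ℕ → ℝ)
    (hpos : ∀ m, 0 < lam m) (hsum : Summable lam) (M : ℕ)
    (M' : ℕ) (hM' : M' ≤ M) :
    esymm (M + 1) lam / esymm M lam ≤ (∑' i : ℕ, lam (M' + i)) / ((M : ℝ) + 1 - M') := by
  have hnn : 0 ≤ lam := fun m => (hpos m).le
  have hp := summable_prod_of_card_eq hnn hsum
  have htail : Summable fun u : Set.Ici M' => lam u := hsum.subtype _
  have hpointed := summable_pointedFinset (Set.Ici M') M hnn (hp M) htail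
  have hgap : (0 : ℝ) < M + 1 - M' := by
    have : (M' : ℝ) ≤ M := by exact_mod_cast hM'
    linarith
  have hcount (s : {s : Finset ℕ // s.card = M + 1}) :
      (M : ℝ) + 1 - M' ≤ #(s.1.filter (· ∈ Set.Ici M')) := by
    have h : ((M + 1 : ℕ) : ℝ) ≤ #(s.1.filter (· ∈ Set.Ici M')) + M' := by
      exact_mod_cast s.2 ▸ card_le_card_filter_Ici_add s.1 M'
    push_cast at h
    linarith
  rw [div_le_div_iff₀ (esymm_pos hpos hsum M) hgap, mul_comm, ← tsum_Ici_eq_tsum_add]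
  calc ((M : ℝ) + 1 - M') * esymm (M + 1) lam
      = ∑' s : {s : Finset ℕ // s.card = M + 1}, ((M : ℝ) + 1 - M') * ∏ u ∈ s.1, lam u :=
        tsum_mul_left.symm
    _ ≤ ∑' s : {s : Finset ℕ // s.card = M + 1},
          (#(s.1.filter (· ∈ Set.Ici M')) : ℝ) * ∏ u ∈ s.1, lam u :=
        ((hp (M + 1)).mul_left _).tsum_le_tsum
          (fun s => mul_le_mul_of_nonneg_right (hcount s) (prod_nonneg fun u _ => hnn u))
          (summable_card_filter_mul_prod _ _ hnn hpointed)
    _ = ∑' x : PointedFinset (Set.Ici M') M, ∏ u ∈ x.1.1, lam u :=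
        (tsum_pointedFinset_eq _ _ hpointed).symm
    _ ≤ esymm M lam * ∑' u : Set.Ici M', lam u := tsum_pointedFinset_le _ _ hnn (hp M) htail
    _ = (∑' u : Set.Ici M', lam u) * esymm M lam := mul_comm _ _

/-- Guruswami–Sinop inequality for infinite summable sequences: for a nonincreasing summable
sequence of strictly positive reals (indexed from `0`, so the paper's `λ_m` is `lam (m-1)`),
`M ≥ 1` and `M' ≤ M`, `p_{M+1}(λ)/p_M(λ) ≤ (Σ_{m ≥ M'+1} λ_m)/(M+1−M')`; the tail sum over
`1`-based indices `m ≥ M'+1` is `∑' i, lam (M' + i)`. -/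
theorem guruswami_sinop_infinite (lam : ℕ → ℝ) (hmono : Antitone lam)
    (hpos : ∀ m, 0 < lam m) (hsum : Summable lam) (M : ℕ) (hM : 1 ≤ M)
    (M' : ℕ) (hM' : M' ≤ M) :
    esymm (M + 1) lam / esymm M lam ≤ (∑' i : ℕ, lam (M' + i)) / ((M : ℝ) + 1 - M') :=
  guruswami_sinop_infinite_general lam hpos hsum M M' hM'
end
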